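/- Let B > 0 and let G be the piecewise indicator kernel on (0,B) × ℝ. Let c ∈ (0,B) and let N be the least natural number such that 2^N c ≥ B/2 (so that 2^k c ∈ (0,B) for all 0 ≤ k ≤ N). Then for Lebesgue-almost every y ∈ (0,B), 𝟙_{(c,B)}(y) = Σ_{k=0}^{N} 2^k G(B − 2^k c, y). In particular, the indicator function 𝟙_{(c,B)} is a finite linear combination of the functions {G(a,·) : a ∈ (0,B)} as an element of L¹(0,B). -/
import Mathlib


open MeasureTheory Set

/-- The piecewise indicator kernel `G` on `(0,B) × ℝ`:
`G(a,y) = 𝟙_{(B−a,B)}(y)` if `a ≤ B/2`, and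
`G(a,y) = 𝟙_{(B−a,2(B−a))}(y) − 𝟙_{(2(B−a),B)}(y)` otherwise. -/
noncomputable def Gker (B a y : ℝ) : ℝ :=
  if a ≤ B / 2 then (Set.Ioo (B - a) B).indicator 1 y
  else (Set.Ioo (B - a) (2 * (B - a))).indicator 1 y
    - (Set.Ioo (2 * (B - a)) B).indicator 1 y

theorem stmt7 (B c : ℝ) (hB : 0 < B) (hc : c ∈ Set.Ioo (0:ℝ) B) (N : ℕ)
    (hN : B / 2 ≤ 2 ^ N * c) (hNmin : ∀ m : ℕ, m < N → 2 ^ m * c < B / 2) :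
    ∀ᵐ y ∂(volume.restrict (Set.Ioo (0:ℝ) B)),
      (Set.Ioo c B).indicator 1 y
        = ∑ k ∈ Finset.range (N + 1), (2:ℝ) ^ k * Gker B (B - 2 ^ k * c) y := by
  obtain ⟨hc0, hcB⟩ := hc
  -- the bad (finite) set of dyadic endpoints
  have hbad : ∀ᵐ y ∂(volume.restrict (Set.Ioo (0:ℝ) B)),
      ∀ k ∈ Finset.range (N + 2), y ≠ 2 ^ k * c := by
    apply ae_restrict_of_ae
    have hfin : (⋃ k ∈ Finset.range (N + 2), {(2:ℝ) ^ k * c}).Finite := by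
      apply Set.Finite.biUnion (Finset.finite_toSet _)
      intro k _; exact Set.finite_singleton _
    have h0 : volume (⋃ k ∈ Finset.range (N + 2), {(2:ℝ) ^ k * c}) = 0 :=
      hfin.measure_zero _
    rw [ae_iff]
    refine measure_mono_null ?_ h0
    intro y hy
    simp only [Set.mem_setOf_eq, not_forall] at hy
    obtain ⟨k, hk, hne⟩ := hy
    simp only [Set.mem_iUnion, Set.mem_singleton_iff]
    exact ⟨k, hk, by push_neg at hne; exact hne⟩
  have hmem : ∀ᵐ y ∂(volume.restrict (Set.Ioo (0:ℝ) B)), y ∈ Set.Ioo (0:ℝ) B := ae_restrict_mem measurableSet_Ioo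
  filter_upwards [hbad, hmem] with y hyS hy
  obtain ⟨hy0, hyB⟩ := hy
  set g : ℕ → ℝ := fun k =>
    if k ≤ N then 2 ^ k * (Set.Ioo (2 ^ k * c) B).indicator 1 y else 0 with hg
  have hterm : ∀ k ∈ Finset.range (N + 1),
      (2:ℝ) ^ k * Gker B (B - 2 ^ k * c) y = g k - g (k + 1) := by
    intro k hk
    simp only [Finset.mem_range] at hk
    have hkN : k ≤ N := Nat.lt_succ_iff.mp hk
    have hpos : (0:ℝ) < 2 ^ k * c := by positivity
    have hBa : B - (B - 2 ^ k * c) = 2 ^ k * c := by ring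
    rcases eq_or_lt_of_le hkN with hkeq | hklt
    · -- k = N : the short branch of Gker
      subst hkeq
      have hcond : B - 2 ^ k * c ≤ B / 2 := by linarith
      rw [Gker, if_pos hcond, hBa]
      simp [hg, Nat.lt_irrefl]
    · -- k < N : the long branch; need y ≠ 2^(k+1) c
      have hlt : 2 ^ k * c < B / 2 := hNmin k hklt
      have hcond : ¬ (B - 2 ^ k * c ≤ B / 2) := by linarith
      have hne : y ≠ 2 ^ (k + 1) * c := hyS (k + 1) (by
        simp only [Finset.mem_range]; omega)
      have h2 : 2 * (2 ^ k * c) = 2 ^ (k + 1) * c := by ring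
      rw [Gker, if_neg hcond, hBa, h2]
      have hk1 : k + 1 ≤ N := hklt
      simp only [hg, if_pos hkN, if_pos hk1]
      have hmB : 2 ^ (k + 1) * c < B := by
        have : (2:ℝ) ^ (k + 1) * c = 2 * (2 ^ k * c) := by ring
        linarith [this ▸ (by linarith : 2 * (2 ^ k * c) < B)]
      have ham : (2:ℝ) ^ k * c < 2 ^ (k + 1) * c := by
        have : (2:ℝ) ^ (k + 1) * c = 2 * (2 ^ k * c) := by ring
        linarith
      have ind1 : ∀ (s : Set ℝ), y ∈ s → s.indicator (1 : ℝ → ℝ) y = 1 := by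
        intro s h; simp [Set.indicator_of_mem h]
      have ind0 : ∀ (s : Set ℝ), y ∉ s → s.indicator (1 : ℝ → ℝ) y = 0 := by
        intro s h; exact Set.indicator_of_notMem h _
      rcases hne.lt_or_gt with hy1 | hy1
      · rcases lt_or_ge ((2:ℝ) ^ k * c) y with hya | hya
        · rw [ind1 (Set.Ioo (2^k*c) (2^(k+1)*c)) ⟨hya, hy1⟩,
              ind0 _ (by simp only [Set.mem_Ioo, not_and, not_lt]; intro h; linarith),
              ind1 (Set.Ioo (2^k*c) B) ⟨hya, hyB⟩]
          ring
        · rw [ind0 _ (by simp only [Set.mem_Ioo, not_and, not_lt]; intro h; linarith),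
              ind0 _ (by simp only [Set.mem_Ioo, not_and, not_lt]; intro h; linarith),
              ind0 _ (by simp only [Set.mem_Ioo, not_and, not_lt]; intro h; linarith)]
          ring
      · rw [ind0 _ (by simp only [Set.mem_Ioo, not_and, not_lt]; intro h; linarith),
            ind1 (Set.Ioo (2^(k+1)*c) B) ⟨hy1, hyB⟩, ind1 (Set.Ioo (2^k*c) B) ⟨by linarith, hyB⟩]
        ring
  rw [Finset.sum_congr rfl hterm, Finset.sum_range_sub' g]
  simp [hg, Nat.not_succ_le_self]
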